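/- arXiv:1508.06384 — 3 statements merged into one kernel-verified Lean document; each statement's English description precedes it below -/
import Mathlib

section
/- For d ≥ 3, the integral S₂(k²) = ∫_{ℝ^{d-1}} (k² + |p⊥|²) δ(k + p⊥·(1,...,1)) θ(e^{2s} - k² - |p⊥|²) d^{d-1}p⊥ equals (1/√(d-1))·[dk²/(d-1) + ((d-2)/d)(e^{2s} - dk²/(d-1))]·Ω_{d-2}·(e^{2s} - dk²/(d-1))^{(d-2)/2} for dk²/(d-1) ≤ e^{2s}. -/
/-!
Since `k² + k²/(d-1) = d k²/(d-1)`, the integrand is `a + ‖q‖²` with `a = d k²/(d-1)` and the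
region is the ball `‖q‖² ≤ e^{2s} - a` in `ℝ^{d-2}`. In polar coordinates the integral of
`a + ‖x‖²` over a ball of radius `R` in `n` dimensions is
`n Ω_n ∫₀^R rⁿ⁻¹ (a + r²) dr = Ω_n (a + n R²/(n+2)) Rⁿ`.
-/

open MeasureTheory Real Set Metric Module

theorem integral_Ioi_pow_pred_smul_indicator_const_add_sq {n : ℕ} (hn : 0 < n) (a : ℝ)
    {R : ℝ} (hR : 0 ≤ R) :
    ∫ y in Ioi (0 : ℝ), y ^ (n - 1) • (Iic R).indicator (fun r => a + r ^ 2) y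
      = (a / n + R ^ 2 / (n + 2)) * R ^ n := by
  have hpow : ∀ y : ℝ, y ^ (n - 1) • (Iic R).indicator (fun r => a + r ^ 2) y
      = (Iic R).indicator (fun r => a * r ^ (n - 1) + r ^ (n + 1)) y := by
    intro y
    by_cases hy : y ∈ Iic R
    · rw [indicator_of_mem hy, indicator_of_mem hy, smul_eq_mul,
        show n + 1 = (n - 1) + 2 by omega, pow_add]
      ring
    · rw [indicator_of_notMem hy, indicator_of_notMem hy, smul_zero]
  simp_rw [hpow]
  rw [setIntegral_indicator measurableSet_Iic, Ioi_inter_Iic,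
    ← intervalIntegral.integral_of_le hR,
    intervalIntegral.integral_add (f := fun y => a * y ^ (n - 1))
      ((continuous_const.mul (continuous_pow _)).intervalIntegrable _ _)
      ((continuous_pow _).intervalIntegrable _ _),
    intervalIntegral.integral_const_mul, integral_pow, integral_pow, Nat.sub_add_cancel hn,
    zero_pow hn.ne', zero_pow (Nat.succ_ne_zero _)]
  have hn' : (n : ℝ) ≠ 0 := by positivity
  push_cast [Nat.cast_pred hn, sub_add_cancel]
  field_simp
  ring

theorem setIntegral_closedBall_const_add_norm_sq {E : Type*} [NormedAddCommGroup E]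
    [NormedSpace ℝ E] [FiniteDimensional ℝ E] [MeasurableSpace E] [BorelSpace E] [Nontrivial E]
    (μ : Measure E) [μ.IsAddHaarMeasure] (a : ℝ) {R : ℝ} (hR : 0 ≤ R) :
    ∫ x in closedBall (0 : E) R, (a + ‖x‖ ^ 2) ∂μ
      = μ.real (ball 0 1) * (a + finrank ℝ E / (finrank ℝ E + 2) * R ^ 2) * R ^ finrank ℝ E := by
  have hradial : (closedBall (0 : E) R).indicator (fun x => a + ‖x‖ ^ 2)
      = fun x => (Iic R).indicator (fun r => a + r ^ 2) ‖x‖ := by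
    ext x
    simp [indicator, mem_closedBall]
  have hn : (finrank ℝ E : ℝ) ≠ 0 := by have := finrank_pos (R := ℝ) (M := E); positivity
  rw [← integral_indicator measurableSet_closedBall, hradial, integral_fun_norm_addHaar,
    integral_Ioi_pow_pred_smul_indicator_const_add_sq finrank_pos a hR, nsmul_eq_mul, smul_eq_mul]
  field_simp

theorem setIntegral_const_add_norm_sq_le {E : Type*} [NormedAddCommGroup E]
    [InnerProductSpace ℝ E] [FiniteDimensional ℝ E] [MeasurableSpace E] [BorelSpace E]
    [Nontrivial E] {a b : ℝ} (hab : a ≤ b) :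
    ∫ x in {x : E | a + ‖x‖ ^ 2 ≤ b}, (a + ‖x‖ ^ 2)
      = (a + finrank ℝ E / (finrank ℝ E + 2) * (b - a)) *
          (π ^ ((finrank ℝ E : ℝ) / 2) / Gamma (finrank ℝ E / 2 + 1)) *
          (b - a) ^ ((finrank ℝ E : ℝ) / 2) := by
  have hba : 0 ≤ b - a := sub_nonneg.mpr hab
  have hsublevel : {x : E | a + ‖x‖ ^ 2 ≤ b} = closedBall 0 √(b - a) := by
    ext x
    rw [mem_ofPred_eq, mem_closedBall_zero_iff, Real.le_sqrt (norm_nonneg x) hba]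
    constructor <;> intro h <;> linarith
  have hball : volume.real (ball (0 : E) 1)
      = π ^ ((finrank ℝ E : ℝ) / 2) / Gamma (finrank ℝ E / 2 + 1) := by
    rw [measureReal_def, InnerProductSpace.volume_ball, ENNReal.ofReal_one, one_pow, one_mul,
      ENNReal.toReal_ofReal (by positivity), sqrt_eq_rpow, ← rpow_natCast, ← rpow_mul pi_nonneg]
    ring_nf
  have hradius : √(b - a) ^ finrank ℝ E = (b - a) ^ ((finrank ℝ E : ℝ) / 2) := by
    rw [sqrt_eq_rpow, ← rpow_natCast, ← rpow_mul hba]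
    ring_nf
  rw [hsublevel, setIntegral_closedBall_const_add_norm_sq volume a (sqrt_nonneg _), hball,
    hradius, sq_sqrt hba]
  ring

/-- Integral approximation S₂(k²): with the delta constraint k + p⊥·(1,…,1)=0
resolved (p⊥ = -(k/(d-1))n + q with q ⊥ n, so |p⊥|² = k²/(d-1) + |q|²), the
integral of (k² + |p⊥|²) over the constrained region, divided by √(d-1), equals
(1/√(d-1))·[dk²/(d-1) + ((d-2)/d)(e^{2s} - dk²/(d-1))]·Ω_{d-2}·(e^{2s} - dk²/(d-1))^{(d-2)/2},
where Ω_{d-2} = π^{(d-2)/2}/Γ(d/2) is the volume of the unit (d-2)-ball. -/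
theorem stmt_4 (d : ℕ) (hd : 3 ≤ d) (s k : ℝ)
    (hk : (d : ℝ) * k ^ 2 / ((d : ℝ) - 1) ≤ Real.exp (2 * s)) :
    (1 / Real.sqrt ((d : ℝ) - 1)) *
      (∫ q in {q : EuclideanSpace ℝ (Fin (d - 2)) |
          k ^ 2 + (k ^ 2 / ((d : ℝ) - 1) + ‖q‖ ^ 2) ≤ Real.exp (2 * s)},
        (k ^ 2 + (k ^ 2 / ((d : ℝ) - 1) + ‖q‖ ^ 2)))
    = (1 / Real.sqrt ((d : ℝ) - 1)) *
        ((d : ℝ) * k ^ 2 / ((d : ℝ) - 1) +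
          (((d : ℝ) - 2) / (d : ℝ)) *
            (Real.exp (2 * s) - (d : ℝ) * k ^ 2 / ((d : ℝ) - 1))) *
        (Real.pi ^ (((d : ℝ) - 2) / 2) / Real.Gamma ((d : ℝ) / 2)) *
        (Real.exp (2 * s) - (d : ℝ) * k ^ 2 / ((d : ℝ) - 1)) ^ (((d : ℝ) - 2) / 2) := by
  have : Nonempty (Fin (d - 2)) := ⟨⟨0, by omega⟩⟩
  have hd1 : (d : ℝ) - 1 ≠ 0 := by
    have : (3 : ℝ) ≤ d := by exact_mod_cast hd
    linarith
  have hconst : ∀ r : ℝ, k ^ 2 + (k ^ 2 / ((d : ℝ) - 1) + r) = d * k ^ 2 / (d - 1) + r := by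
    intro r
    field_simp
    ring
  have hdim : (finrank ℝ (EuclideanSpace ℝ (Fin (d - 2))) : ℝ) = d - 2 := by
    rw [finrank_euclideanSpace_fin, Nat.cast_sub (by omega)]
    norm_num
  simp_rw [hconst]
  rw [setIntegral_const_add_norm_sq_le hk, hdim, show ((d : ℝ) - 2) / 2 + 1 = d / 2 by ring]
  ring
end

section
/- The Jacobian of (β_m, β_λ) with β_m = -2x - 48y/(1+x)², β_λ = -4y + 56y²/(1+x)³, evaluated at (x,y) = (-12/19, 49/13718), equals the matrix [[34/7, -17328/49],[-42/361, 4]], whose eigenvalues are 76/7 and -2. -/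
/-! At the fixed point `1 + x = 7/19`, so every partial derivative is a rational number read off
from the quotient rule; the characteristic polynomial of the resulting Jacobian is
`μ² - (62/7) μ - 152/7 = (μ - 76/7) (μ + 2)`. -/

/-- `β_m` in the variables `x = m̄²`, `y = λ̄`. -/
noncomputable def betaMass (x y : ℝ) : ℝ := -2 * x - 48 * y / (1 + x) ^ 2

/-- `β_λ` in the variables `x = m̄²`, `y = λ̄`. -/
noncomputable def betaCoupling (x y : ℝ) : ℝ := -4 * y + 56 * y ^ 2 / (1 + x) ^ 3

lemma hasDerivAt_one_add_pow (n : ℕ) (x : ℝ) :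
    HasDerivAt (fun x : ℝ => (1 + x) ^ n) (n * (1 + x) ^ (n - 1)) x := by
  simpa using ((hasDerivAt_id x).const_add 1).fun_pow n

lemma hasDerivAt_betaMass_left (y : ℝ) {x : ℝ} (hx : 1 + x ≠ 0) :
    HasDerivAt (fun x => betaMass x y) (-2 + 96 * y / (1 + x) ^ 3) x := by
  have h := ((hasDerivAt_id x).const_mul (-2)).fun_sub
    ((hasDerivAt_const x (48 * y)).fun_div (hasDerivAt_one_add_pow 2 x) (pow_ne_zero 2 hx))
  refine h.congr_deriv ?_
  field_simp
  ring

lemma hasDerivAt_betaMass_right (x y : ℝ) :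
    HasDerivAt (fun y => betaMass x y) (-48 / (1 + x) ^ 2) y := by
  have h := (hasDerivAt_const y (-2 * x)).fun_sub
    (((hasDerivAt_id y).const_mul 48).div_const ((1 + x) ^ 2))
  refine h.congr_deriv ?_
  ring

lemma hasDerivAt_betaCoupling_left (y : ℝ) {x : ℝ} (hx : 1 + x ≠ 0) :
    HasDerivAt (fun x => betaCoupling x y) (-168 * y ^ 2 / (1 + x) ^ 4) x := by
  have h := (hasDerivAt_const x (-4 * y)).fun_add
    ((hasDerivAt_const x (56 * y ^ 2)).fun_div (hasDerivAt_one_add_pow 3 x) (pow_ne_zero 3 hx))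
  refine h.congr_deriv ?_
  field_simp
  ring

lemma hasDerivAt_betaCoupling_right (x y : ℝ) :
    HasDerivAt (fun y => betaCoupling x y) (-4 + 112 * y / (1 + x) ^ 3) y := by
  have h := ((hasDerivAt_id y).const_mul (-4)).fun_add
    ((((hasDerivAt_id y).fun_pow 2).const_mul 56).div_const ((1 + x) ^ 3))
  refine h.congr_deriv ?_
  simp only [id, Nat.cast_ofNat]
  ring

lemma Matrix.det_of_fin_two_sub_smul_one {R : Type*} [CommRing R] (a b c d μ : R) :
    (Matrix.of ![![a, b], ![c, d]] - μ • (1 : Matrix (Fin 2) (Fin 2) R)).det =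
      (a - μ) * (d - μ) - b * c := by
  simp [Matrix.det_fin_two]

/-- The Jacobian of β_m = -2x - 48y/(1+x)², β_λ = -4y + 56y²/(1+x)³ at the
non-Gaussian fixed point (-12/19, 49/13718) equals [[34/7, -17328/49],
[-42/361, 4]], whose eigenvalues are 76/7 and -2. -/
theorem stmt_12 :
    HasDerivAt (fun x : ℝ => -2 * x - 48 * (49 / 13718) / (1 + x) ^ 2)
      (34 / 7) (-12 / 19) ∧
    HasDerivAt (fun y : ℝ => -2 * (-12 / 19) - 48 * y / (1 + (-12 / 19)) ^ 2)
      (-17328 / 49) (49 / 13718) ∧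
    HasDerivAt (fun x : ℝ => -4 * (49 / 13718) + 56 * (49 / 13718) ^ 2 / (1 + x) ^ 3)
      (-42 / 361) (-12 / 19) ∧
    HasDerivAt (fun y : ℝ => -4 * y + 56 * y ^ 2 / (1 + (-12 / 19)) ^ 3)
      (4 : ℝ) (49 / 13718) ∧
    Matrix.det ((Matrix.of ![![(34 / 7 : ℝ), -17328 / 49], ![-42 / 361, 4]])
      - (76 / 7 : ℝ) • (1 : Matrix (Fin 2) (Fin 2) ℝ)) = 0 ∧
    Matrix.det ((Matrix.of ![![(34 / 7 : ℝ), -17328 / 49], ![-42 / 361, 4]])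
      - (-2 : ℝ) • (1 : Matrix (Fin 2) (Fin 2) ℝ)) = 0 := by
  have hx : (1 + -12 / 19 : ℝ) ≠ 0 := by norm_num
  refine ⟨?_, ?_, ?_, ?_, ?_, ?_⟩
  · exact (hasDerivAt_betaMass_left _ hx).congr_deriv (by norm_num)
  · exact (hasDerivAt_betaMass_right _ _).congr_deriv (by norm_num)
  · exact (hasDerivAt_betaCoupling_left _ hx).congr_deriv (by norm_num)
  · exact (hasDerivAt_betaCoupling_right _ _).congr_deriv (by norm_num)
  · rw [Matrix.det_of_fin_two_sub_smul_one]; norm_num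
  · rw [Matrix.det_of_fin_two_sub_smul_one]; norm_num
end

section
/- Poisson summation for the theta function: for α > 0 and β ∈ ℝ, Σ_{n∈ℤ} e^{-αn²} e^{iβn} = √(π/α) Σ_{n∈ℤ} e^{-(β+2πn)²/(4α)}. -/
/-! Poisson summation for the Gaussian `exp (-π a x² + 2π b x)` (`Complex.tsum_exp_neg_quadratic`)
at the real `a = α / π` and the imaginary `b = iβ / (2π)`, followed by the reindexing `n ↦ -n`. -/

open Real Complex

lemma Complex.one_div_ofReal_cpow_one_half {x : ℝ} (hx : 0 ≤ x) :
    1 / (x : ℂ) ^ (1 / 2 : ℂ) = (√x⁻¹ : ℂ) := by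
  rw [show (1 / 2 : ℂ) = ((1 / 2 : ℝ) : ℂ) by norm_num, ← ofReal_cpow hx, sqrt_eq_rpow,
    inv_rpow hx, one_div, ofReal_inv]

lemma cexp_gaussian_mul_phase (α β x : ℝ) :
    cexp (-π * ((α / π : ℝ) : ℂ) * x ^ 2 + 2 * π * (I * β / (2 * π)) * x) =
      (rexp (-α * x ^ 2) : ℂ) * cexp (β * x * I) := by
  have hπ : (π : ℂ) ≠ 0 := ofReal_ne_zero.mpr pi_ne_zero
  rw [ofReal_exp, ← Complex.exp_add]
  congr 1
  push_cast
  field_simp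

lemma cexp_shifted_gaussian {α : ℝ} (hα : α ≠ 0) (β x : ℝ) :
    cexp (-π / ((α / π : ℝ) : ℂ) * (x + I * (I * β / (2 * π))) ^ 2) =
      (rexp (-(β - 2 * π * x) ^ 2 / (4 * α)) : ℂ) := by
  have hπ : (π : ℂ) ≠ 0 := ofReal_ne_zero.mpr pi_ne_zero
  have hα' : (α : ℂ) ≠ 0 := ofReal_ne_zero.mpr hα
  rw [ofReal_exp]
  congr 1
  push_cast
  rw [mul_div_assoc, ← mul_assoc, I_mul_I]
  field_simp
  ring

/-- Poisson summation for the theta function: for α > 0 and β ∈ ℝ,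
Σ_{n∈ℤ} e^{-αn²} e^{iβn} = √(π/α) Σ_{n∈ℤ} e^{-(β+2πn)²/(4α)}. -/
theorem stmt_14 (α β : ℝ) (hα : 0 < α) :
    ∑' n : ℤ, (Real.exp (-α * (n : ℝ) ^ 2) : ℂ) * Complex.exp ((β : ℂ) * (n : ℂ) * Complex.I)
      = (Real.sqrt (Real.pi / α) : ℂ) *
        ∑' n : ℤ, (Real.exp (-(β + 2 * Real.pi * (n : ℝ)) ^ 2 / (4 * α)) : ℂ) := by
  have ha : 0 < α / π := div_pos hα pi_pos
  have poisson := Complex.tsum_exp_neg_quadratic (a := ((α / π : ℝ) : ℂ))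
    (by rwa [ofReal_re]) (I * β / (2 * π))
  rw [one_div_ofReal_cpow_one_half ha.le, inv_div] at poisson
  convert poisson using 2
  · funext n
    simpa using (cexp_gaussian_mul_phase α β n).symm
  · rw [← (Equiv.neg ℤ).tsum_eq (fun n : ℤ => (rexp (-(β + 2 * π * n) ^ 2 / (4 * α)) : ℂ))]
    refine tsum_congr fun n => ?_
    simpa [sub_eq_add_neg] using (cexp_shifted_gaussian hα.ne' β n).symm
end
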